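/- Let N ≥ 4 and let 2 ≤ j ≤ N−2. Then ∑_{k=1}^{N−1} ( cos(2πk/N) + 1/(2 − 2cos(2πk/N)) ) · ( 1 − exp(−2πijk/N) ) = b(j,N), where b(j,N) := (1/2)·∑_{k=1}^{N−1} (1 − cos(2πjk/N))/(1 − cos(2πk/N)); moreover b(j,N) > 0. -/

import Mathlib

/-!
With `θₖ = 2πk/N`, writing `cos θₖ = (e^{iθₖ} + e^{-iθₖ})/2` turns `∑ₖ cos θₖ (1 - e^{-ijθₖ})`
into sums of `e^{imθₖ}` over a full period with `m ∈ {±1, 1 - j, -1 - j}`; none of these is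
divisible by `N` when `2 ≤ j ≤ N - 2`, so each geometric sum vanishes. In what remains, the
weights `1/(2 - 2 cos θₖ)` are invariant under `k ↦ N - k` while `sin (jθₖ)` changes sign, so
the imaginary part cancels and the real part is `b`. Every term of `b` is nonnegative and the
one at `k = 1` is positive.
-/

open Real Finset

theorem sum_range_cos_two_pi_mul_div_eq_zero {N : ℕ} {m : ℤ} (hm : ¬(N : ℤ) ∣ m) :
    ∑ k ∈ range N, cos (2 * π * m * k / N) = 0 := by
  obtain rfl | hN := eq_or_ne N 0
  · simp
  have hζ := Complex.isPrimitiveRoot_exp N hN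
  have hz1 : Complex.exp (2 * π * Complex.I / N) ^ m ≠ 1 :=
    fun h => hm ((hζ.zpow_eq_one_iff_dvd m).mp h)
  have hzN : (Complex.exp (2 * π * Complex.I / N) ^ m) ^ N = 1 := by
    rw [← zpow_natCast, ← zpow_mul, mul_comm (m : ℤ), zpow_mul, zpow_natCast, hζ.pow_eq_one,
      one_zpow]
  have hterm : ∀ k : ℕ,
      cos (2 * π * m * k / N) = ((Complex.exp (2 * π * Complex.I / N) ^ m) ^ k).re := by
    intro k
    rw [← Complex.exp_int_mul, ← Complex.exp_nat_mul, ← Complex.exp_ofReal_mul_I_re]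
    congr 2
    push_cast
    ring
  simp_rw [hterm, ← Complex.re_sum, geom_sum_eq hz1, hzN, sub_self, zero_div, Complex.zero_re]

theorem sum_Ico_cos_mul_one_sub_cos_eq_zero {N : ℕ} {m : ℤ} (h1 : ¬(N : ℤ) ∣ 1)
    (hm1 : ¬(N : ℤ) ∣ m + 1) (hm2 : ¬(N : ℤ) ∣ m - 1) :
    ∑ k ∈ Ico 1 N, cos (2 * π * k / N) * (1 - cos (2 * π * m * k / N)) = 0 := by
  obtain rfl | hN := Nat.eq_zero_or_pos N
  · simp
  have hterm : ∀ k : ℕ, cos (2 * π * k / N) * (1 - cos (2 * π * m * k / N)) =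
      cos (2 * π * (1 : ℤ) * k / N) -
        (cos (2 * π * (m + 1 : ℤ) * k / N) + cos (2 * π * (m - 1 : ℤ) * k / N)) / 2 := by
    intro k
    have hadd : 2 * π * (m + 1 : ℤ) * k / N = 2 * π * m * k / N + 2 * π * k / N := by
      push_cast; ring
    have hsub : 2 * π * (m - 1 : ℤ) * k / N = 2 * π * m * k / N - 2 * π * k / N := by
      push_cast; ring
    rw [hadd, hsub, cos_add, cos_sub, Int.cast_one, mul_one]
    ring
  have hrange : ∑ k ∈ range N, cos (2 * π * k / N) * (1 - cos (2 * π * m * k / N)) = 0 := by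
    simp only [hterm, sum_sub_distrib, ← sum_div, sum_add_distrib,
      sum_range_cos_two_pi_mul_div_eq_zero h1, sum_range_cos_two_pi_mul_div_eq_zero hm1,
      sum_range_cos_two_pi_mul_div_eq_zero hm2]
    norm_num
  simpa [sum_range_eq_add_Ico _ hN] using hrange

theorem sum_Ico_eq_zero_of_reflect_eq_neg {G : Type*} [AddCommGroup G] [IsAddTorsionFree G]
    {f : ℕ → G} {N : ℕ} (hf : ∀ k ∈ Ico 1 N, f (N - k) = -f k) : ∑ k ∈ Ico 1 N, f k = 0 := by
  have hreflect := sum_Ico_reflect f 1 (Nat.le_succ N)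
  rw [Nat.add_sub_cancel_left, Nat.add_sub_cancel, sum_congr rfl hf, sum_neg_distrib] at hreflect
  exact self_eq_neg.mp hreflect.symm

theorem cos_two_pi_mul_sub_div {k N : ℕ} (hkN : k ≤ N) :
    cos (2 * π * (N - k : ℕ) / N) = cos (2 * π * k / N) := by
  obtain rfl | hN := eq_or_ne N 0
  · rw [Nat.le_zero.1 hkN]
  have hangle : 2 * π * (N - k : ℕ) / N = 2 * π - 2 * π * k / N := by
    rw [Nat.cast_sub hkN]
    field_simp
  rw [hangle, cos_two_pi_sub]

theorem sin_two_pi_mul_mul_sub_div (j : ℕ) {k N : ℕ} (hkN : k ≤ N) (hN : N ≠ 0) :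
    sin (2 * π * j * (N - k : ℕ) / N) = -sin (2 * π * j * k / N) := by
  have hangle : 2 * π * j * (N - k : ℕ) / N = j * (2 * π) - 2 * π * j * k / N := by
    rw [Nat.cast_sub hkN]
    field_simp
  rw [hangle, sin_nat_mul_two_pi_sub]

theorem sum_Ico_ofReal_mul_one_sub_exp {c : ℕ → ℝ} {N : ℕ}
    (hc : ∀ k ∈ Ico 1 N, c (N - k) = c k) (j : ℕ) :
    ∑ k ∈ Ico 1 N, (c k : ℂ) * (1 - Complex.exp (-(2 * π * Complex.I * j * k / N))) =
      ((∑ k ∈ Ico 1 N, c k * (1 - cos (2 * π * j * k / N)) : ℝ) : ℂ) := by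
  have hterm : ∀ k : ℕ, (c k : ℂ) * (1 - Complex.exp (-(2 * π * Complex.I * j * k / N))) =
      ((c k * (1 - cos (2 * π * j * k / N)) : ℝ) : ℂ) +
        ((c k * sin (2 * π * j * k / N) : ℝ) : ℂ) * Complex.I := by
    intro k
    rw [show -(2 * π * Complex.I * j * k / N) = ((-(2 * π * j * k / N) : ℝ) : ℂ) * Complex.I by
        push_cast; ring,
      Complex.exp_mul_I, ← Complex.ofReal_cos, ← Complex.ofReal_sin, cos_neg, sin_neg]
    push_cast
    ring
  have hsin : ∑ k ∈ Ico 1 N, c k * sin (2 * π * j * k / N) = 0 := by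
    refine sum_Ico_eq_zero_of_reflect_eq_neg fun k hk => ?_
    have hkN := (mem_Ico.1 hk).2
    rw [hc k hk, sin_two_pi_mul_mul_sub_div j hkN.le (by omega), mul_neg]
  simp only [hterm, sum_add_distrib, ← sum_mul, ← Complex.ofReal_sum, hsin, Complex.ofReal_zero,
    zero_mul, add_zero]

theorem cos_two_pi_mul_div_lt_one {k N : ℕ} (hk : 0 < k) (hkN : k < N) :
    cos (2 * π * k / N) < 1 := by
  have hk' : (0 : ℝ) < k := by exact_mod_cast hk
  have hN : (0 : ℝ) < N := by exact_mod_cast hk.trans hkN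
  have hpos : 0 < 2 * π * k / N := by positivity
  have hlt : 2 * π * k / N < 2 * π := by
    rw [div_lt_iff₀ (by positivity)]
    have : (k : ℝ) < N := by exact_mod_cast hkN
    nlinarith [pi_pos]
  refine (cos_le_one _).lt_of_ne fun h => ?_
  rw [cos_eq_one_iff_of_lt_of_lt (by linarith) hlt] at h
  exact hpos.ne' h

theorem sum_Ico_one_sub_cos_div_one_sub_cos_pos {N j : ℕ} (hj : 0 < j) (hjN : j < N) :
    0 < ∑ k ∈ Ico 1 N, (1 - cos (2 * π * j * k / N)) / (1 - cos (2 * π * k / N)) := by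
  have hterm_nonneg : ∀ k ∈ Ico 1 N,
      0 ≤ (1 - cos (2 * π * j * k / N)) / (1 - cos (2 * π * k / N)) :=
    fun k _ => div_nonneg (sub_nonneg.2 (cos_le_one _)) (sub_nonneg.2 (cos_le_one _))
  have hfirst_pos : 0 < (1 - cos (2 * π * j * (1 : ℕ) / N)) / (1 - cos (2 * π * (1 : ℕ) / N)) := by
    have hcos_one := cos_two_pi_mul_div_lt_one (k := 1) (N := N) one_pos (by omega)
    simp only [Nat.cast_one, mul_one] at hcos_one ⊢
    exact div_pos (sub_pos.2 (cos_two_pi_mul_div_lt_one hj hjN)) (sub_pos.2 hcos_one)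
  exact sum_pos' hterm_nonneg ⟨1, mem_Ico.2 ⟨le_rfl, by omega⟩, hfirst_pos⟩

noncomputable def ngonWeight (N k : ℕ) : ℝ :=
  cos (2 * π * k / N) + 1 / (2 - 2 * cos (2 * π * k / N))

theorem ngonWeight_sub {k N : ℕ} (hkN : k ≤ N) : ngonWeight N (N - k) = ngonWeight N k := by
  simp only [ngonWeight, cos_two_pi_mul_sub_div hkN]

theorem sum_Ico_ngonWeight_mul_one_sub_cos {N : ℕ} {m : ℤ} (h1 : ¬(N : ℤ) ∣ 1)
    (hm1 : ¬(N : ℤ) ∣ m + 1) (hm2 : ¬(N : ℤ) ∣ m - 1) :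
    ∑ k ∈ Ico 1 N, ngonWeight N k * (1 - cos (2 * π * m * k / N)) =
      1 / 2 * ∑ k ∈ Ico 1 N, (1 - cos (2 * π * m * k / N)) / (1 - cos (2 * π * k / N)) := by
  simp only [ngonWeight, add_mul, sum_add_distrib, sum_Ico_cos_mul_one_sub_cos_eq_zero h1 hm1 hm2,
    zero_add, mul_sum]
  refine sum_congr rfl fun k _ => ?_
  rw [show (2 : ℝ) - 2 * cos (2 * π * k / N) = 2 * (1 - cos (2 * π * k / N)) by ring, one_div,
    mul_inv]
  ring

theorem ngon_middle_eigenvalue_sum_general (N j : ℕ) (hj1 : 2 ≤ j) (hj2 : j ≤ N - 2)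
    (b : ℝ)
    (hb : b = (1 / 2) * ∑ k ∈ Finset.Icc 1 (N - 1),
      (1 - Real.cos (2 * π * j * k / N)) / (1 - Real.cos (2 * π * k / N))) :
    (∑ k ∈ Finset.Icc 1 (N - 1),
      (((Real.cos (2 * π * k / N) : ℝ) : ℂ) +
          1 / (2 - 2 * ((Real.cos (2 * π * k / N) : ℝ) : ℂ))) *
        (1 - Complex.exp (-(2 * (π : ℂ) * Complex.I * j * k / N))) = (b : ℂ)) ∧
    0 < b := by
  rw [Icc_sub_one_right_eq_Ico_of_not_isMin (by simp only [isMin_iff_eq_bot, Nat.bot_eq_zero]; omega)] at hb ⊢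
  refine ⟨?_, hb ▸ mul_pos one_half_pos
    (sum_Ico_one_sub_cos_div_one_sub_cos_pos (by omega) (by omega))⟩
  have hdvd : ∀ m : ℤ, 0 < m → m < N → ¬(N : ℤ) ∣ m :=
    fun m h0 hm h => (Int.le_of_dvd h0 h).not_gt hm
  have hreal := sum_Ico_ngonWeight_mul_one_sub_cos (N := N) (m := j)
    (hdvd 1 one_pos (by omega)) (hdvd _ (by omega) (by omega)) (hdvd _ (by omega) (by omega))
  rw [Int.cast_natCast] at hreal
  calc _ = ∑ k ∈ Ico 1 N,
        (ngonWeight N k : ℂ) * (1 - Complex.exp (-(2 * π * Complex.I * j * k / N))) := by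
        simp only [ngonWeight, Complex.ofReal_add, Complex.ofReal_div, Complex.ofReal_one,
          Complex.ofReal_sub, Complex.ofReal_mul, Complex.ofReal_ofNat]
    _ = b := by
        rw [sum_Ico_ofReal_mul_one_sub_exp (fun k hk => ngonWeight_sub (mem_Ico.1 hk).2.le) j,
          hreal, hb]

/-- For `N ≥ 4` and `2 ≤ j ≤ N-2`,
`∑_{k=1}^{N-1} (cos(2πk/N) + 1/(2 - 2cos(2πk/N))) · (1 - exp(-2πijk/N)) = b(j,N)`
where `b(j,N) = (1/2)·∑_{k=1}^{N-1} (1 - cos(2πjk/N))/(1 - cos(2πk/N))`; moreover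
`b(j,N) > 0`. -/
theorem ngon_middle_eigenvalue_sum (N j : ℕ) (hN : 4 ≤ N) (hj1 : 2 ≤ j) (hj2 : j ≤ N - 2)
    (b : ℝ)
    (hb : b = (1 / 2) * ∑ k ∈ Finset.Icc 1 (N - 1),
      (1 - Real.cos (2 * π * j * k / N)) / (1 - Real.cos (2 * π * k / N))) :
    (∑ k ∈ Finset.Icc 1 (N - 1),
      (((Real.cos (2 * π * k / N) : ℝ) : ℂ) +
          1 / (2 - 2 * ((Real.cos (2 * π * k / N) : ℝ) : ℂ))) *
        (1 - Complex.exp (-(2 * (π : ℂ) * Complex.I * j * k / N))) = (b : ℂ)) ∧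
    0 < b :=
  ngon_middle_eigenvalue_sum_general N j hj1 hj2 b hb
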